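/- Let s>0, N≥1 and ξ∈ℕ_0^N with m=Σ_{i=1}^N ξ_i. Let x_1≤x_2≤…≤x_m be the nondecreasing list of positions associated with ξ (i.e. the site i appears exactly ξ_i times among the x_k). Then for every 0≤n≤m, the occupation-number expression Σ_{(n_1,…,n_N)∈ℕ_0^N, n_1+…+n_N=n} Π_{i=1}^N binom(ξ_i, n_i) Π_{j=1}^{n_i} (2s(N+1-i)-j+Σ_{k=i}^N n_k)/(2s(N+1)-j+Σ_{k=i}^N n_k) equals the position expression Σ_{1≤i_1<…<i_n≤m} Π_{α=1}^n (n-α+2s(N+1-x_{i_α}))/(n-α+2s(N+1)). -/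

import Mathlib

/-!
Write `p k` for the 0-indexed site of particle `k`. A strictly monotone `ι : Fin n → Fin m`
chooses `n` of the `m` particles. Since `p ∘ ι` is monotone, the chosen particles at site `i`
carry consecutive ranks `α`, starting at the number of chosen particles to the left of `i`, and
`n` minus that number is the tail sum `∑_{k ≥ i} n_k`. So the product in (2.19) depends only on
the occupation numbers `n_i` of the choice and is the product in (2.17), while the number of
choices with occupation numbers `n_i` is `∏ binom(ξ_i, n_i)`.
-/

open scoped Classical

noncomputable section

namespace HeatModel

/-- The coefficient `g_ξ(n)` in occupation-number form (formula (2.17) of the paper);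
`xi i` is the number of dual particles at the (1-indexed) site `i+1`. -/
def gOcc (s : ℝ) (N : ℕ) (xi : Fin N → ℕ) (n : ℕ) : ℝ :=
  ∑ m ∈ Finset.Nat.antidiagonalTuple N n,
    ∏ i : Fin N,
      (Nat.choose (xi i) (m i) : ℝ) *
        ∏ j ∈ Finset.Icc 1 (m i),
          (2 * s * ((N : ℝ) - (i : ℕ)) - (j : ℝ) +
              (∑ k ∈ Finset.univ.filter (fun k : Fin N => i ≤ k), (m k : ℝ))) /
            (2 * s * ((N : ℝ) + 1) - (j : ℝ) +
              (∑ k ∈ Finset.univ.filter (fun k : Fin N => i ≤ k), (m k : ℝ)))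

/-- The coefficient `g_x(n)` in position form (formula (2.19) of the paper), for dual
particles at the nondecreasing (1-indexed) positions `x 0 ≤ x 1 ≤ … ≤ x (m-1)`. -/
def gPos (s : ℝ) (N : ℕ) (m : ℕ) (x : Fin m → ℕ) (n : ℕ) : ℝ :=
  ∑ ι ∈ Finset.univ.filter (fun ι : Fin n → Fin m => StrictMono ι),
    ∏ α : Fin n,
      ((n : ℝ) - ((α : ℕ) + 1) + 2 * s * ((N : ℝ) + 1 - (x (ι α) : ℝ))) /
        ((n : ℝ) - ((α : ℕ) + 1) + 2 * s * ((N : ℝ) + 1))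

end HeatModel

open Finset

theorem Fin.val_lt_card_filter_iff {n : ℕ} {P : Fin n → Prop} [DecidablePred P]
    (hP : IsLowerSet {a | P a}) (a : Fin n) : (a : ℕ) < #{b | P b} ↔ P a := by
  constructor
  · intro ha
    by_contra hna
    have hsub : ({b | P b} : Finset (Fin n)) ⊆ Iio a := fun b hb => by
      simp only [mem_filter, mem_univ, true_and] at hb
      exact mem_Iio.2 (lt_of_not_ge fun hab => hna (hP hab hb))
    have := card_le_card hsub
    rw [Fin.card_Iio] at this
    omega
  · intro ha
    have hsub : Iic a ⊆ ({b | P b} : Finset (Fin n)) := fun b hb =>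
      mem_filter.2 ⟨mem_univ b, hP (mem_Iic.1 hb) ha⟩
    have := card_le_card hsub
    rw [Fin.card_Iic] at this
    omega

section

variable {β : Type*} [Fintype β] [LinearOrder β] {M : Type*} [CommMonoid M]

theorem Monotone.prod_fin_eq_prod_prod_range {n : ℕ} {q : Fin n → β} (hq : Monotone q)
    (F : ℕ → β → M) :
    ∏ a : Fin n, F a (q a) = ∏ i, ∏ t ∈ range #{a | q a = i}, F (#{a | q a < i} + t) i := by
  rw [← prod_fiberwise univ q]
  refine prod_congr rfl fun i _ => ?_
  have hlt := Fin.val_lt_card_filter_iff (P := fun a => q a < i)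
    fun _ _ hba ha => (hq hba).trans_lt ha
  have hle := Fin.val_lt_card_filter_iff (P := fun a => q a ≤ i)
    fun _ _ hba ha => (hq hba).trans ha
  have hfiber : ({a | q a = i} : Finset (Fin n)).map Fin.valEmbedding
      = Ico #{a | q a < i} #{a | q a ≤ i} := by
    ext k
    simp only [mem_map, mem_filter, mem_univ, true_and, Fin.valEmbedding_apply, mem_Ico]
    constructor
    · rintro ⟨a, ha, rfl⟩
      exact ⟨not_lt.1 fun h => ((hlt a).1 h).ne ha, (hle a).2 ha.le⟩
    · rintro ⟨hk₁, hk₂⟩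
      have hkn : k < n := hk₂.trans_le ((card_filter_le _ _).trans (card_fin n).le)
      refine ⟨⟨k, hkn⟩, le_antisymm ((hle _).1 hk₂) (not_lt.1 fun h => ?_), rfl⟩
      exact (not_lt.2 hk₁) ((hlt ⟨k, hkn⟩).2 h)
  calc ∏ a ∈ {a | q a = i}, F a (q a) = ∏ a ∈ {a | q a = i}, F a i :=
        prod_congr rfl fun a ha => by rw [(mem_filter.1 ha).2]
    _ = ∏ k ∈ Ico #{a | q a < i} #{a | q a ≤ i}, F k i := by rw [← hfiber, prod_map]; rfl
    _ = _ := by rw [prod_Ico_eq_prod_range, ← Nat.card_Ico, ← hfiber, card_map]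

theorem Finset.card_filter_lt_add_sum_card_fiber {α : Type*} [Fintype α] (q : α → β) (i : β) :
    #{a | q a < i} + ∑ k ∈ {k | i ≤ k}, #{a | q a = k} = Fintype.card α := by
  rw [sum_card_fiberwise_eq_card_filter, ← card_univ,
    ← card_filter_add_card_filter_not (s := univ) (fun a => q a < i)]
  simp only [mem_filter, mem_univ, true_and, not_lt]

end

section

variable {γ : Type*} [Fintype γ]

theorem Finset.sum_strictMono_eq_sum_powersetCard [LinearOrder γ] {M : Type*} [AddCommMonoid M]
    (n : ℕ) (f : Finset γ → M) :
    ∑ ι ∈ univ.filter (fun ι : Fin n → γ => StrictMono ι), f (univ.image ι)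
      = ∑ S ∈ powersetCard n univ, f S := by
  refine sum_bij' (fun ι _ => univ.image ι)
    (fun S hS => S.orderEmbOfFin (mem_powersetCard.1 hS).2) (fun ι hι => ?_)
    (fun S hS => by simpa using (S.orderEmbOfFin _).strictMono) (fun ι hι => ?_)
    (fun S hS => image_orderEmbOfFin_univ _ _) (fun _ _ => rfl)
  · simp only [mem_filter, mem_univ, true_and] at hι
    rw [mem_powersetCard, card_image_of_injective _ hι.injective]
    simp
  · simp only [mem_filter, mem_univ, true_and] at hι
    exact (orderEmbOfFin_unique _ (fun a => mem_image_of_mem ι (mem_univ a)) hι).symm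

variable {β : Type*} [Fintype β] [DecidableEq β]

theorem Finset.card_filter_card_fiber_eq (p : γ → β) (c : β → ℕ) :
    #{S : Finset γ | ∀ i, #{k ∈ S | p k = i} = c i} = ∏ i, (#{k | p k = i}).choose (c i) := by
  have hfiber : ∀ T : β → Finset γ, (∀ i, T i ⊆ univ.filter (p · = i)) →
      ∀ i, (univ.biUnion T).filter (p · = i) = T i := by
    intro T hT i
    ext k
    simp only [mem_filter, mem_biUnion, mem_univ, true_and]
    constructor
    · rintro ⟨⟨j, hj⟩, rfl⟩
      rwa [(mem_filter.1 (hT j hj)).2]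
    · exact fun hk => ⟨⟨i, hk⟩, (mem_filter.1 (hT i hk)).2⟩
  simp_rw [← card_powersetCard, ← Fintype.card_piFinset]
  refine card_nbij' (fun S i => S.filter (p · = i)) (fun T => univ.biUnion T) ?_ ?_ ?_ ?_
  · intro S hS
    simp only [coe_filter, mem_univ, true_and, Set.mem_ofPred_eq, Fintype.coe_piFinset,
      Set.mem_pi, Set.mem_univ, SetLike.mem_coe, mem_powersetCard, forall_const] at hS ⊢
    exact fun i => ⟨filter_subset_filter _ (subset_univ S), hS i⟩
  · intro T hT
    simp only [Fintype.coe_piFinset, Set.mem_pi, Set.mem_univ, SetLike.mem_coe, mem_powersetCard,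
      forall_const, coe_filter, mem_univ, true_and, Set.mem_ofPred_eq] at hT ⊢
    exact fun i => by rw [hfiber T (fun j => (hT j).1), (hT i).2]
  · intro S _
    ext k
    simp
  · intro T hT
    simp only [Fintype.coe_piFinset, Set.mem_pi, Set.mem_univ, SetLike.mem_coe, mem_powersetCard,
      forall_const] at hT
    exact funext (hfiber T fun j => (hT j).1)

theorem Finset.sum_powersetCard_eq_sum_antidiagonalTuple {N : ℕ} (p : γ → Fin N)
    {M : Type*} [AddCommMonoid M] (n : ℕ) (g : (Fin N → ℕ) → M) :
    ∑ S ∈ powersetCard n univ, g (fun i => #{k ∈ S | p k = i})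
      = ∑ c ∈ Nat.antidiagonalTuple N n, (∏ i, (#{k | p k = i}).choose (c i)) • g c := by
  have hsum (S : Finset γ) : ∑ i, #{k ∈ S | p k = i} = #S :=
    (card_eq_sum_card_fiberwise fun _ _ => mem_univ _).symm
  rw [← sum_fiberwise_of_maps_to' (t := Nat.antidiagonalTuple N n) fun S hS => by
    rw [Nat.mem_antidiagonalTuple, hsum, (mem_powersetCard.1 hS).2]]
  refine sum_congr rfl fun c hc => ?_
  rw [sum_const, ← card_filter_card_fiber_eq]
  congr 2
  ext S
  simp only [mem_filter, mem_powersetCard, mem_univ, true_and, subset_univ, funext_iff]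
  refine and_iff_right_of_imp fun hS => ?_
  rw [← hsum S, Fintype.sum_congr _ _ hS, ← Nat.mem_antidiagonalTuple.1 hc]

end

theorem Fintype.exists_eq_of_sum_card_fiber_eq {α β γ : Type*} [Fintype α] [Fintype β]
    [DecidableEq γ] {f : α → γ} {g : β → γ} (hg : Function.Injective g)
    (h : ∑ i, #{a | f a = g i} = Fintype.card α) (a : α) : ∃ i, f a = g i := by
  have hcover : #{a | f a ∈ univ.image g} = #(univ : Finset α) := by
    rw [← sum_card_fiberwise_eq_card_filter, sum_image hg.injOn, card_univ, h]
  obtain ⟨i, -, hi⟩ := mem_image.1 (card_filter_eq_iff.1 hcover a (mem_univ a))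
  exact ⟨i, hi.symm⟩

namespace HeatModel

def occWeight (s : ℝ) (N : ℕ) (c : Fin N → ℕ) : ℝ :=
  ∏ i : Fin N, ∏ j ∈ Finset.Icc 1 (c i),
    (2 * s * ((N : ℝ) - (i : ℕ)) - (j : ℝ) +
        (∑ k ∈ Finset.univ.filter (fun k : Fin N => i ≤ k), (c k : ℝ))) /
      (2 * s * ((N : ℝ) + 1) - (j : ℝ) +
        (∑ k ∈ Finset.univ.filter (fun k : Fin N => i ≤ k), (c k : ℝ)))

theorem prod_eq_occWeight_of_monotone {N n : ℕ} (s : ℝ) {q : Fin n → Fin N} (hq : Monotone q) :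
    ∏ a : Fin n, ((n : ℝ) - ((a : ℕ) + 1) + 2 * s * ((N : ℝ) - (q a : ℕ))) /
        ((n : ℝ) - ((a : ℕ) + 1) + 2 * s * ((N : ℝ) + 1))
      = occWeight s N (fun i => #{a | q a = i}) := by
  rw [hq.prod_fin_eq_prod_prod_range
    (fun k i => ((n : ℝ) - (k + 1) + 2 * s * ((N : ℝ) - (i : ℕ))) /
      ((n : ℝ) - (k + 1) + 2 * s * ((N : ℝ) + 1)))]
  refine prod_congr rfl fun i _ => ?_
  have htail : (n : ℝ) = #{a | q a < i} + ∑ k ∈ {k | i ≤ k}, (#{a | q a = k} : ℝ) := by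
    exact_mod_cast ((card_filter_lt_add_sum_card_fiber q i).trans (Fintype.card_fin n)).symm
  rw [← Finset.Ico_add_one_right_eq_Icc, prod_Ico_eq_prod_range, Nat.add_sub_cancel]
  refine prod_congr rfl fun t _ => ?_
  rw [htail]
  push_cast
  ring

theorem exists_site_of_card_fiber {N m : ℕ} {xi : Fin N → ℕ} (hm : m = ∑ i, xi i)
    {x : Fin m → ℕ} (hmono : Monotone x) (hcount : ∀ i : Fin N, #{k | x k = (i : ℕ) + 1} = xi i) :
    ∃ p : Fin m → Fin N, Monotone p ∧ (∀ k, x k = p k + 1) ∧ ∀ i, #{k | p k = i} = xi i := by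
  choose p hp using Fintype.exists_eq_of_sum_card_fiber_eq (f := x)
    (g := fun i : Fin N => (i : ℕ) + 1) ((add_left_injective 1).comp Fin.val_injective)
    (by simp only [hcount, ← hm, Fintype.card_fin])
  refine ⟨p, fun a b hab => ?_, hp, fun i => ?_⟩
  · have := hmono hab
    rw [hp, hp] at this
    exact Fin.le_iff_val_le_val.2 (by omega)
  · rw [← hcount i]
    simp only [hp, Nat.add_right_cancel_iff, Fin.val_inj]

theorem gPos_eq_sum_powersetCard_occWeight (s : ℝ) {N m : ℕ} {x : Fin m → ℕ} (n : ℕ)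
    {p : Fin m → Fin N} (hp : Monotone p) (hx : ∀ k, x k = p k + 1) :
    gPos s N m x n = ∑ S ∈ powersetCard n univ, occWeight s N (fun i => #{k ∈ S | p k = i}) := by
  rw [gPos, ← sum_strictMono_eq_sum_powersetCard]
  refine sum_congr rfl fun ι hι => ?_
  have hι : StrictMono ι := (mem_filter.1 hι).2
  simp only [filter_image, card_image_of_injective _ hι.injective]
  refine .trans ?_ (prod_eq_occWeight_of_monotone s (q := fun a => p (ι a)) (hp.comp hι.monotone))
  refine prod_congr rfl fun a _ => ?_
  rw [hx]
  push_cast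
  ring

theorem gOcc_eq_gPos_general (N : ℕ) (s : ℝ) (xi : Fin N → ℕ)
    (m : ℕ) (hm : m = ∑ i : Fin N, xi i) (x : Fin m → ℕ) (hmono : Monotone x)
    (hcount : ∀ i : Fin N, (Finset.univ.filter fun k : Fin m => x k = (i : ℕ) + 1).card = xi i)
    (n : ℕ) :
    gOcc s N xi n = gPos s N m x n := by
  obtain ⟨p, hp, hx, hp_card⟩ := exists_site_of_card_fiber hm hmono hcount
  rw [gPos_eq_sum_powersetCard_occWeight s n hp hx, sum_powersetCard_eq_sum_antidiagonalTuple]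
  simp only [gOcc, occWeight, hp_card, nsmul_eq_mul, Nat.cast_prod, prod_mul_distrib]

/-- Equivalence of the occupation-number formula (2.17) and the position formula (2.19)
for the coefficients of the non-equilibrium multivariate moments. -/
theorem gOcc_eq_gPos (N : ℕ) (hN : 1 ≤ N) (s : ℝ) (hs : 0 < s) (xi : Fin N → ℕ)
    (m : ℕ) (hm : m = ∑ i : Fin N, xi i) (x : Fin m → ℕ) (hmono : Monotone x)
    (hcount : ∀ i : Fin N, (Finset.univ.filter fun k : Fin m => x k = (i : ℕ) + 1).card = xi i)
    (n : ℕ) (hn : n ≤ m) :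
    gOcc s N xi n = gPos s N m x n :=
  gOcc_eq_gPos_general N s xi m hm x hmono hcount n

end HeatModel
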